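/- arXiv:1308.6359 — 6 statements merged into one kernel-verified Lean document; each statement's English description precedes it below -/
import Mathlib

section
/- Let A ∈ M_q and B ∈ M_p be complex matrices, and suppose B = Σ_{j=1}^r F_j A F_j* where F_1,...,F_r ∈ M_{p,q} satisfy Σ_{j=1}^r F_j* F_j = I_q. Then for any unitarily invariant norm ‖·‖ on M_{pr}, we have ‖I_r ⊗ B‖ ≤ r · ‖A ⊕ 0‖, where A ⊕ 0 denotes the block-diagonal matrix in M_{pr} with A in the top-left block and zeros elsewhere. -/
open Matrix

/-!
The columns of `G = [F₁; …; F_r]` are orthonormal, so `M = G A Gᴴ` is unitarily equivalent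
to `A ⊕ 0`, and the diagonal blocks of `M` are the `F_j A F_jᴴ`, which sum to `B`.
Averaging `M` over the diagonal unitaries `diag(ψ(k) I_p)`, `ψ` running over the characters of
`ℤ/r`, kills the off-diagonal blocks (this is the pinching of `M`), and averaging the pinching
over the `r` cyclic shifts of the blocks gives `I_r ⊗ B / r`. Both averages are convex
combinations of unitary conjugates, so `‖I_r ⊗ B‖ ≤ r ‖M‖ = r ‖A ⊕ 0‖`.
-/

variable {𝕜 : Type*} [RCLike 𝕜] {m n : Type*} [Fintype n] [DecidableEq n]

def Seminorm.IsUnitarilyInvariant (N : Seminorm 𝕜 (Matrix n n 𝕜)) : Prop :=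
  ∀ (U V : unitaryGroup n 𝕜) (X : Matrix n n 𝕜), N (U * X * V) = N X

namespace Matrix

section CommRing

variable {α : Type*} [CommRing α] [StarRing α]

lemma permMatrix_mem_unitaryGroup (σ : Equiv.Perm n) : σ.permMatrix α ∈ unitaryGroup n α := by
  rw [mem_unitaryGroup_iff, star_eq_conjTranspose, conjTranspose_permMatrix,
    PEquiv.mul_toMatrix_toPEquiv]
  ext i j
  simp [one_apply, Equiv.Perm.inv_def]

lemma permMatrix_mul_mul_conjTranspose (σ : Equiv.Perm n) (X : Matrix n n α) :
    σ.permMatrix α * X * (σ.permMatrix α)ᴴ = X.submatrix σ σ := by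
  simp [PEquiv.toMatrix_toPEquiv_mul, PEquiv.mul_toMatrix_toPEquiv, Equiv.Perm.inv_def]

lemma submatrix_mem_unitaryGroup [Fintype m] [DecidableEq m] {U : Matrix m m α}
    (hU : U ∈ unitaryGroup m α) (e : n ≃ m) : U.submatrix e e ∈ unitaryGroup n α := by
  rw [mem_unitaryGroup_iff, star_eq_conjTranspose, conjTranspose_submatrix, submatrix_mul_equiv,
    ← star_eq_conjTranspose, mem_unitaryGroup_iff.mp hU, submatrix_one_equiv]

end CommRing

theorem exists_mem_unitaryGroup_submatrix_eq [DecidableEq m] (f : m ↪ n) {G : Matrix n m 𝕜}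
    (hG : Gᴴ * G = 1) : ∃ U ∈ unitaryGroup n 𝕜, U.submatrix id f = G := by
  let col : m → EuclideanSpace 𝕜 n := fun j => WithLp.toLp 2 fun i => G i j
  have hcol : Orthonormal 𝕜 col := by
    rw [← gram_eq_one_iff_orthonormal, gram_eq_conjTranspose_mul (EuclideanSpace.basisFun n 𝕜)]
    exact hG
  let v : n → EuclideanSpace 𝕜 n := Function.extend f col 0
  have hv : Orthonormal 𝕜 ((Set.range f).domRestrict v) := by
    convert hcol.comp _ (Equiv.ofInjective f f.injective).symm.injective
    ext ⟨_, j, rfl⟩ : 1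
    simp [v, f.injective.extend_apply, col]
  obtain ⟨b, hb⟩ := hv.exists_orthonormalBasis_extension_of_card_eq (by simp)
  refine ⟨(EuclideanSpace.basisFun n 𝕜).toBasis.toMatrix b,
    (EuclideanSpace.basisFun n 𝕜).toMatrix_orthonormalBasis_mem_unitary b, ?_⟩
  ext x j
  rw [submatrix_apply, Module.Basis.toMatrix_apply]
  simp [hb (f j) ⟨j, rfl⟩, v, f.injective.extend_apply, col]

lemma of_dite_lt_eq_mul_mul {α : Type*} [Semiring α] [StarRing α] {q k : ℕ} (hq : q ≤ k)
    (A : Matrix (Fin q) (Fin q) α) :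
    of (fun i j : Fin k =>
        if h : (i : ℕ) < q ∧ (j : ℕ) < q then A ⟨i, h.1⟩ ⟨j, h.2⟩ else 0) =
      (1 : Matrix (Fin k) (Fin k) α).submatrix id (Fin.castLE hq) * A *
        ((1 : Matrix (Fin k) (Fin k) α).submatrix id (Fin.castLE hq))ᴴ := by
  have hout (i : Fin k) (hi : ¬ (i : ℕ) < q) (l : Fin q) : i ≠ Fin.castLE hq l :=
    fun h => hi (h ▸ l.isLt)
  ext i j
  by_cases hi : (i : ℕ) < q
  · by_cases hj : (j : ℕ) < q
    · obtain ⟨i, rfl⟩ : ∃ i', Fin.castLE hq i' = i := ⟨⟨i, hi⟩, rfl⟩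
      obtain ⟨j, rfl⟩ : ∃ j', Fin.castLE hq j' = j := ⟨⟨j, hj⟩, rfl⟩
      simp [mul_apply, one_apply, (Fin.castLE_injective hq).eq_iff]
    · simp [mul_apply, one_apply, hj, fun l => (hout j hj l).symm]
  · simp [mul_apply, one_apply, hi, hout i hi]

def stack {ι p q α : Type*} (F : ι → Matrix p q α) : Matrix (ι × p) q α :=
  of fun i j => F i.1 i.2 j

lemma conjTranspose_stack_mul_stack {ι p q α : Type*} [Fintype ι] [Fintype p] [Semiring α]
    [StarRing α] (F : ι → Matrix p q α) : (stack F)ᴴ * stack F = ∑ i, (F i)ᴴ * F i := by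
  ext j k
  simp [stack, mul_apply, sum_apply, Fintype.sum_prod_type]

@[simp]
lemma stack_submatrix_prodMk {ι p q α : Type*} (F : ι → Matrix p q α) (g : ι) :
    (stack F).submatrix (Prod.mk g) id = F g :=
  rfl

lemma submatrix_mul_mul_conjTranspose {k l α : Type*} [Fintype m] [Semiring α] [StarRing α]
    (G : Matrix l m α) (A : Matrix m m α) (e : k → l) :
    (G * A * Gᴴ).submatrix e e = G.submatrix e id * A * (G.submatrix e id)ᴴ := by
  ext i j
  simp [mul_apply]

end Matrix

namespace Seminorm.IsUnitarilyInvariant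

variable {N : Seminorm 𝕜 (Matrix n n 𝕜)}

lemma map_conj (hN : N.IsUnitarilyInvariant) {U : Matrix n n 𝕜} (hU : U ∈ unitaryGroup n 𝕜)
    (X : Matrix n n 𝕜) : N (U * X * Uᴴ) = N X :=
  hN ⟨U, hU⟩ (star ⟨U, hU⟩) X

lemma map_submatrix (hN : N.IsUnitarilyInvariant) (σ : Equiv.Perm n) (X : Matrix n n 𝕜) :
    N (X.submatrix σ σ) = N X := by
  rw [← permMatrix_mul_mul_conjTranspose, hN.map_conj (permMatrix_mem_unitaryGroup σ)]

lemma comp_reindex [Fintype m] [DecidableEq m] (hN : N.IsUnitarilyInvariant) (e : m ≃ n) :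
    (N.comp (reindexLinearEquiv 𝕜 𝕜 e e).toLinearMap).IsUnitarilyInvariant := by
  rintro ⟨U, hU⟩ ⟨V, hV⟩ X
  have := hN ⟨_, submatrix_mem_unitaryGroup hU e.symm⟩
    ⟨_, submatrix_mem_unitaryGroup hV e.symm⟩ (X.submatrix e.symm e.symm)
  simpa [coe_reindexLinearEquiv] using this

lemma map_isometry_conj [Fintype m] [DecidableEq m] (hN : N.IsUnitarilyInvariant) (f : m ↪ n)
    {G : Matrix n m 𝕜} (hG : Gᴴ * G = 1) (A : Matrix m m 𝕜) :
    N (G * A * Gᴴ) =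
      N ((1 : Matrix n n 𝕜).submatrix id f * A * ((1 : Matrix n n 𝕜).submatrix id f)ᴴ) := by
  obtain ⟨U, hU, rfl⟩ := exists_mem_unitaryGroup_submatrix_eq f hG
  have hUf : U.submatrix id f = U * (1 : Matrix n n 𝕜).submatrix id f := by
    ext i j
    simp [mul_apply, one_apply]
  conv_rhs => rw [← hN.map_conj hU]
  simp only [hUf, conjTranspose_mul, Matrix.mul_assoc]

end Seminorm.IsUnitarilyInvariant

section Pinching

variable {Γ : Type*} [Fintype Γ] [DecidableEq Γ]

namespace Matrix

def pinching {α : Type*} [Zero α] (X : Matrix (Γ × m) (Γ × m) α) :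
    Matrix (Γ × m) (Γ × m) α :=
  of fun i j => if i.1 = j.1 then X i j else 0

lemma sum_submatrix_addRight_pinching [AddGroup Γ] {α : Type*} [Semiring α]
    (X : Matrix (Γ × m) (Γ × m) α) :
    ∑ s : Γ, (pinching X).submatrix (Equiv.prodCongr (Equiv.addRight s) (Equiv.refl m))
        (Equiv.prodCongr (Equiv.addRight s) (Equiv.refl m)) =
      kroneckerMap (· * ·) 1 (∑ g, X.submatrix (Prod.mk g) (Prod.mk g)) := by
  ext ⟨g, i⟩ ⟨h, j⟩
  simp only [sum_apply, submatrix_apply, pinching, of_apply, kroneckerMap_apply, one_apply,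
    Equiv.prodCongr_apply, Prod.map, Equiv.coe_addRight, Equiv.refl_apply, add_left_inj]
  split_ifs with hgh
  · subst hgh
    rw [one_mul]
    exact Fintype.sum_equiv (Equiv.addLeft g) _ _ fun s => rfl
  · simp

variable [AddCommGroup Γ]

lemma diagonal_addChar_mem_unitaryGroup (ψ : AddChar Γ ℂ) :
    diagonal (fun i : Γ × n => ψ i.1) ∈ unitaryGroup (Γ × n) ℂ := by
  rw [mem_unitaryGroup_iff', star_eq_conjTranspose, diagonal_conjTranspose, diagonal_mul_diagonal,
    ← diagonal_one]
  congr 1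
  ext i
  simp [← AddChar.map_neg_eq_conj, ← AddChar.map_add_eq_mul]

lemma sum_diagonal_addChar_conj (X : Matrix (Γ × n) (Γ × n) ℂ) :
    ∑ ψ : AddChar Γ ℂ,
        diagonal (fun i : Γ × n => ψ i.1) * X * (diagonal fun i : Γ × n => ψ i.1)ᴴ =
      (Fintype.card Γ : ℂ) • pinching X := by
  ext i j
  simp only [diagonal_conjTranspose, diagonal_mul, mul_diagonal, sum_apply, Pi.star_apply,
    RCLike.star_def, ← AddChar.map_neg_eq_conj]
  have hchar (ψ : AddChar Γ ℂ) : ψ i.1 * X i j * ψ (-j.1) = ψ (i.1 - j.1) * X i j := by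
    rw [sub_eq_add_neg, AddChar.map_add_eq_mul]
    ring
  simp only [hchar, ← Finset.sum_mul, AddChar.sum_apply_eq_ite, sub_eq_zero, pinching, smul_apply,
    of_apply, smul_eq_mul, ite_mul, zero_mul, mul_ite, mul_zero]

end Matrix

namespace Seminorm.IsUnitarilyInvariant

variable [AddCommGroup Γ] {N : Seminorm ℂ (Matrix (Γ × n) (Γ × n) ℂ)}

lemma map_pinching_le (hN : N.IsUnitarilyInvariant) (X : Matrix (Γ × n) (Γ × n) ℂ) :
    N (pinching X) ≤ N X := by
  have hΓ : (0 : ℝ) < Fintype.card Γ := by exact_mod_cast Fintype.card_pos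
  refine le_of_mul_le_mul_left ?_ hΓ
  calc Fintype.card Γ * N (pinching X) = N ((Fintype.card Γ : ℂ) • pinching X) := by
        rw [map_smul_eq_mul, Complex.norm_natCast]
    _ = N (∑ ψ : AddChar Γ ℂ, diagonal (fun i : Γ × n => ψ i.1) * X *
          (diagonal fun i : Γ × n => ψ i.1)ᴴ) := by rw [sum_diagonal_addChar_conj]
    _ ≤ ∑ ψ : AddChar Γ ℂ, N (diagonal (fun i : Γ × n => ψ i.1) * X *
          (diagonal fun i : Γ × n => ψ i.1)ᴴ) :=
        Finset.le_sum_of_subadditive N (map_zero N).le (map_add_le_add N) _ _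
    _ = Fintype.card Γ * N X := by
        simp only [hN.map_conj (diagonal_addChar_mem_unitaryGroup _), Finset.sum_const,
          Finset.card_univ, AddChar.card_eq, nsmul_eq_mul]

theorem map_kroneckerMap_one_sum_le (hN : N.IsUnitarilyInvariant)
    (X : Matrix (Γ × n) (Γ × n) ℂ) :
    N (kroneckerMap (· * ·) 1 (∑ g, X.submatrix (Prod.mk g) (Prod.mk g))) ≤
      Fintype.card Γ * N X := by
  rw [← sum_submatrix_addRight_pinching]
  calc _ ≤ ∑ s : Γ, N ((pinching X).submatrix
        (Equiv.prodCongr (Equiv.addRight s) (Equiv.refl n))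
        (Equiv.prodCongr (Equiv.addRight s) (Equiv.refl n))) :=
        Finset.le_sum_of_subadditive N (map_zero N).le (map_add_le_add N) _ _
    _ = Fintype.card Γ * N (pinching X) := by
        simp only [hN.map_submatrix, Finset.sum_const, Finset.card_univ, nsmul_eq_mul]
    _ ≤ Fintype.card Γ * N X := by
        gcongr
        exact hN.map_pinching_le X

end Seminorm.IsUnitarilyInvariant

end Pinching

/-- If `B = ∑ j, F j * A * (F j)ᴴ` with `∑ j, (F j)ᴴ * F j = 1`, then for any
unitarily invariant norm `N` on `M_{rp}`, `N (I_r ⊗ B) ≤ r * N (A ⊕ 0)`. -/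
theorem kron_norm_le {p q r : ℕ} (hq : q ≤ r * p)
    (N : Matrix (Fin (r * p)) (Fin (r * p)) ℂ → ℝ)
    (hN_add : ∀ X Y, N (X + Y) ≤ N X + N Y)
    (hN_smul : ∀ (c : ℂ) X, N (c • X) = ‖c‖ * N X)
    (hN_unitary : ∀ (U V : Matrix.unitaryGroup (Fin (r * p)) ℂ) X,
      N ((U : Matrix (Fin (r * p)) (Fin (r * p)) ℂ) * X * (V : Matrix (Fin (r * p)) (Fin (r * p)) ℂ)) = N X)
    (A : Matrix (Fin q) (Fin q) ℂ) (B : Matrix (Fin p) (Fin p) ℂ)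
    (F : Fin r → Matrix (Fin p) (Fin q) ℂ)
    (hB : B = ∑ j, F j * A * (F j)ᴴ)
    (hF : ∑ j, (F j)ᴴ * F j = 1) :
    N (Matrix.reindex finProdFinEquiv finProdFinEquiv
        (Matrix.kroneckerMap (· * ·) (1 : Matrix (Fin r) (Fin r) ℂ) B))
      ≤ (r : ℝ) * N (Matrix.of fun i j =>
          if h : (i : ℕ) < q ∧ (j : ℕ) < q then A ⟨i, h.1⟩ ⟨j, h.2⟩ else 0) := by
  let ν : Seminorm ℂ (Matrix (Fin (r * p)) (Fin (r * p)) ℂ) := Seminorm.of N hN_add hN_smul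
  have hν : ν.IsUnitarilyInvariant := hN_unitary
  obtain rfl | hr := Nat.eq_zero_or_pos r
  · have h0 : kroneckerMap (· * ·) (1 : Matrix (Fin 0) (Fin 0) ℂ) B = 0 :=
      ext fun i => i.1.elim0
    simp only [h0, reindex_apply, submatrix_zero, CharP.cast_eq_zero, zero_mul]
    exact (map_zero ν).le
  have : NeZero r := ⟨hr.ne'⟩
  let e : Fin r × Fin p ≃ Fin (r * p) := finProdFinEquiv
  let ν' := ν.comp (reindexLinearEquiv ℂ ℂ e e).toLinearMap
  let M := stack F * A * (stack F)ᴴ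
  let G := (stack F).submatrix e.symm id
  have hG : Gᴴ * G = 1 := by
    simp [G, conjTranspose_submatrix, conjTranspose_stack_mul_stack, hF]
  have hBblocks : B = ∑ g, M.submatrix (Prod.mk g) (Prod.mk g) := by
    simp only [M, submatrix_mul_mul_conjTranspose, stack_submatrix_prodMk, hB]
  calc N (reindex e e (kroneckerMap (· * ·) 1 B)) = ν' (kroneckerMap (· * ·) 1 B) := rfl
    _ ≤ r * ν' M := by
        rw [hBblocks]
        simpa only [Fintype.card_fin] using (hν.comp_reindex e).map_kroneckerMap_one_sum_le M
    _ = r * ν (G * A * Gᴴ) := by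
        simp only [ν', M, G, Seminorm.comp_apply, LinearEquiv.coe_coe, coe_reindexLinearEquiv,
          reindex_apply, submatrix_mul_mul_conjTranspose]
    _ = r * N _ := by
        rw [hν.map_isometry_conj (Fin.castLEEmb hq) hG, Fin.coe_castLEEmb,
          ← of_dite_lt_eq_mul_mul hq]
        rfl
end

section
/- Let R_i = U_i D_i V_i^t ∈ M_{q,p} with rank k_i, where D_i ∈ M_{k_i} is diagonal with positive entries and U_i, V_i have orthonormal columns; let S_i = R_i^t. Suppose F_1,...,F_r ∈ M_{p,q} with Σ_j F_j*F_j = I_q satisfy Σ_j F_j R_u R_v* F_j* = S_u S_v* for all 1 ≤ u,v ≤ n. Then there exist k_i × p matrices W_{i1},...,W_{ir} such that F_ℓ R_i = V_i D_i W_{iℓ} for all ℓ, i, and [W_{i1} ⋯ W_{ir}][W_{j1} ⋯ W_{jr}]* = U_i^t conj(U_j) for all i, j. -/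
/-!
Let `P = 1 - Vᵢ Vᵢᴴ` be the projection onto the orthogonal complement of the range of `Vᵢ`.
Since `Sᵢ = Vᵢ Dᵢ Uᵢᵀ`, we have `P Sᵢ = 0`, so the channel identity with `u = v = i` gives
`∑ₗ (P Fₗ Rᵢ)(P Fₗ Rᵢ)ᴴ = P Sᵢ Sᵢᴴ P = 0`; a vanishing sum of positive semidefinite matrices
has vanishing terms, hence `Fₗ Rᵢ = Vᵢ Vᵢᴴ Fₗ Rᵢ`. Taking `W_{iℓ} = Dᵢ⁻¹ Vᵢᴴ Fₗ Rᵢ`, the first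
claim follows, and the channel identity for `(u, v) = (i, j)` turns `∑ₗ W_{iℓ} W_{jℓ}ᴴ` into
`(Dᵢ⁻¹ Vᵢᴴ Sᵢ)(Dⱼ⁻¹ Vⱼᴴ Sⱼ)ᴴ = Uᵢᵀ (Uⱼᵀ)ᴴ`.
-/

open Matrix
open scoped ComplexOrder MatrixOrder

namespace Matrix

variable {𝕜 ι m n : Type*} [RCLike 𝕜] [Fintype m] [Fintype n]

theorem sum_mul_conjTranspose_self_eq_zero_iff {s : Finset ι} {X : ι → Matrix m n 𝕜} :
    ∑ ℓ ∈ s, X ℓ * (X ℓ)ᴴ = 0 ↔ ∀ ℓ ∈ s, X ℓ = 0 := by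
  rw [Finset.sum_eq_zero_iff_of_nonneg fun ℓ _ => (posSemidef_self_mul_conjTranspose _).nonneg]
  simp only [self_mul_conjTranspose_eq_zero]

theorem sum_mul_mul_conjTranspose_mul {k l c : Type*} [Fintype c] {s : Finset ι}
    (A : Matrix k m 𝕜) (B : Matrix l n 𝕜) (X : ι → Matrix m c 𝕜) (Y : ι → Matrix n c 𝕜) :
    ∑ ℓ ∈ s, (A * X ℓ) * (B * Y ℓ)ᴴ = A * (∑ ℓ ∈ s, X ℓ * (Y ℓ)ᴴ) * Bᴴ := by
  simp only [conjTranspose_mul, Matrix.mul_sum, Matrix.sum_mul, Matrix.mul_assoc]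

theorem mul_conjTranspose_mul_eq_of_sum_mul_conjTranspose_eq {k : Type*} [Fintype k] [Fintype ι]
    [DecidableEq m] [DecidableEq k]
    {A : Matrix m k 𝕜} (hA : Aᴴ * A = 1) {X : ι → Matrix m n 𝕜} {B : Matrix k m 𝕜}
    (h : ∑ ℓ, X ℓ * (X ℓ)ᴴ = A * B) (ℓ : ι) : A * (Aᴴ * X ℓ) = X ℓ := by
  set P : Matrix m m 𝕜 := 1 - A * Aᴴ
  have hPA : P * A = 0 := by
    rw [Matrix.sub_mul, Matrix.one_mul, Matrix.mul_assoc, hA, Matrix.mul_one, sub_self]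
  have hPX : ∑ ℓ, (P * X ℓ) * (P * X ℓ)ᴴ = 0 := by
    rw [sum_mul_mul_conjTranspose_mul, h, ← Matrix.mul_assoc, hPA, Matrix.zero_mul,
      Matrix.zero_mul]
  have := (sum_mul_conjTranspose_self_eq_zero_iff.mp hPX) ℓ (Finset.mem_univ _)
  rwa [Matrix.sub_mul, Matrix.one_mul, sub_eq_zero, Matrix.mul_assoc, eq_comm] at this

end Matrix

theorem exists_W_of_channel_general {n p q r : ℕ} (k : Fin n → ℕ)
    (U : (i : Fin n) → Matrix (Fin q) (Fin (k i)) ℂ)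
    (V : (i : Fin n) → Matrix (Fin p) (Fin (k i)) ℂ)
    (d : (i : Fin n) → Fin (k i) → ℝ)
    (hd : ∀ i a, 0 < d i a)
    (hV : ∀ i, (V i)ᴴ * V i = 1)
    (R : Fin n → Matrix (Fin q) (Fin p) ℂ)
    (hR : ∀ i, R i = U i * Matrix.diagonal (fun a => ((d i a : ℝ) : ℂ)) * (V i)ᵀ)
    (S : Fin n → Matrix (Fin p) (Fin q) ℂ)
    (hS : ∀ i, S i = (R i)ᵀ)
    (F : Fin r → Matrix (Fin p) (Fin q) ℂ)
    (hmap : ∀ u v : Fin n, ∑ ℓ, F ℓ * (R u * (R v)ᴴ) * (F ℓ)ᴴ = S u * (S v)ᴴ) :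
    ∃ W : (i : Fin n) → Fin r → Matrix (Fin (k i)) (Fin p) ℂ,
      (∀ (ℓ : Fin r) (i : Fin n),
        F ℓ * R i = V i * Matrix.diagonal (fun a => ((d i a : ℝ) : ℂ)) * W i ℓ) ∧
      (∀ i j : Fin n,
        ∑ ℓ, W i ℓ * (W j ℓ)ᴴ = (U i)ᵀ * (U j).map (starRingEnd ℂ)) := by
  set D := fun i => Matrix.diagonal (fun a => ((d i a : ℝ) : ℂ))
  have hDunit : ∀ i, IsUnit (D i).det := fun i => (isUnit_iff_isUnit_det _).mp <|
    isUnit_diagonal.mpr <| Pi.isUnit_iff.mpr fun a => by simpa using (hd i a).ne'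
  have hSV : ∀ i, S i = V i * D i * (U i)ᵀ := fun i => by
    simp [hS, hR, D, transpose_mul, Matrix.mul_assoc]
  have hchan : ∀ u v, ∑ ℓ, (F ℓ * R u) * (F ℓ * R v)ᴴ = S u * (S v)ᴴ := fun u v => by
    simpa only [conjTranspose_mul, Matrix.mul_assoc] using hmap u v
  have hTS : ∀ i, (D i)⁻¹ * (V i)ᴴ * S i = (U i)ᵀ := fun i => by
    rw [hSV, Matrix.mul_assoc, ← Matrix.mul_assoc (V i)ᴴ, ← Matrix.mul_assoc (V i)ᴴ, hV,
      Matrix.one_mul, ← Matrix.mul_assoc, nonsing_inv_mul _ (hDunit i), Matrix.one_mul]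
  refine ⟨fun i ℓ => (D i)⁻¹ * (V i)ᴴ * (F ℓ * R i), fun ℓ i => ?_, fun i j => ?_⟩
  · have hrange := mul_conjTranspose_mul_eq_of_sum_mul_conjTranspose_eq (hV i)
      (B := D i * (U i)ᵀ * (S i)ᴴ) (by rw [hchan, hSV]; simp only [Matrix.mul_assoc]) ℓ
    simp only [Matrix.mul_assoc]
    rw [← Matrix.mul_assoc (D i), mul_nonsing_inv _ (hDunit i), Matrix.one_mul, hrange]
  · beta_reduce
    rw [sum_mul_mul_conjTranspose_mul, hchan, ← Matrix.mul_assoc, hTS, Matrix.mul_assoc,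
      ← conjTranspose_mul, hTS]
    rfl

/-- Theorem 3.1 (b) ⇒ (c): if `R_i = U_i D_i V_iᵗ` is an SVD and
`S_i = R_iᵗ`, and Kraus operators `F_ℓ` satisfy `∑_ℓ F_ℓ R_u R_v* F_ℓᴴ = S_u S_v*`,
then there exist matrices `W_{iℓ}` with `F_ℓ R_i = V_i D_i W_{iℓ}` and
`∑_ℓ W_{iℓ} W_{jℓ}ᴴ = U_iᵗ conj(U_j)`. -/
theorem exists_W_of_channel {n p q r : ℕ} (k : Fin n → ℕ)
    (U : (i : Fin n) → Matrix (Fin q) (Fin (k i)) ℂ)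
    (V : (i : Fin n) → Matrix (Fin p) (Fin (k i)) ℂ)
    (d : (i : Fin n) → Fin (k i) → ℝ)
    (hd : ∀ i a, 0 < d i a)
    (hU : ∀ i, (U i)ᴴ * U i = 1)
    (hV : ∀ i, (V i)ᴴ * V i = 1)
    (R : Fin n → Matrix (Fin q) (Fin p) ℂ)
    (hR : ∀ i, R i = U i * Matrix.diagonal (fun a => ((d i a : ℝ) : ℂ)) * (V i)ᵀ)
    (S : Fin n → Matrix (Fin p) (Fin q) ℂ)
    (hS : ∀ i, S i = (R i)ᵀ)
    (F : Fin r → Matrix (Fin p) (Fin q) ℂ)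
    (hF : ∑ ℓ, (F ℓ)ᴴ * F ℓ = 1)
    (hmap : ∀ u v : Fin n, ∑ ℓ, F ℓ * (R u * (R v)ᴴ) * (F ℓ)ᴴ = S u * (S v)ᴴ) :
    ∃ W : (i : Fin n) → Fin r → Matrix (Fin (k i)) (Fin p) ℂ,
      (∀ (ℓ : Fin r) (i : Fin n),
        F ℓ * R i = V i * Matrix.diagonal (fun a => ((d i a : ℝ) : ℂ)) * W i ℓ) ∧
      (∀ i j : Fin n,
        ∑ ℓ, W i ℓ * (W j ℓ)ᴴ = (U i)ᵀ * (U j).map (starRingEnd ℂ)) :=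
  exists_W_of_channel_general k U V d hd hV R hR S hS F hmap
end

section
/- Conversely, suppose there exist F_1,...,F_r ∈ M_{p,q} with Σ_j F_j*F_j = I_q and k_i × p matrices W_{iℓ} with F_ℓ R_i = V_i D_i W_{iℓ} for all ℓ,i and [W_{i1} ⋯ W_{ir}][W_{j1} ⋯ W_{jr}]* = U_i^t conj(U_j) for all i,j, where R_i = U_i D_i V_i^t is an SVD and S_i = R_i^t. Then Σ_{ℓ=1}^r F_ℓ R_i R_j* F_ℓ* = S_i S_j* for all i,j. -/
/-! Substituting `F_ℓ R_i = V_i D_i W_{iℓ}` turns the sum into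
`V_i D_i (∑_ℓ W_{iℓ} W_{jℓ}ᴴ) D_jᴴ V_jᴴ = V_i D_i U_iᵀ conj(U_j) D_jᴴ V_jᴴ`, and since diagonal
matrices are symmetric this is `(U_i D_i V_iᵀ)ᵀ ((U_j D_j V_jᵀ)ᵀ)ᴴ = S_i S_jᴴ`. -/

open Matrix

namespace Matrix

theorem sum_mul_mul_conjTranspose_mul_s6 {ι l m n n' o α : Type*} [Fintype ι] [Fintype l] [Fintype m]
    [Fintype o] [NonUnitalSemiring α] [StarRing α]
    (X : Matrix n l α) (Y : Matrix n' m α) (G : ι → Matrix l o α) (H : ι → Matrix m o α) :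
    ∑ i, X * G i * (Y * H i)ᴴ = X * (∑ i, G i * (H i)ᴴ) * Yᴴ := by
  simp only [conjTranspose_mul, Matrix.mul_sum, Matrix.sum_mul, Matrix.mul_assoc]

theorem transpose_mul_conjTranspose_transpose {m n n' a b α : Type*} [Fintype m] [Fintype a]
    [Fintype b] [CommSemiring α] [StarRing α]
    (U : Matrix m a α) (D : Matrix a a α) (V : Matrix n a α)
    (U' : Matrix m b α) (D' : Matrix b b α) (V' : Matrix n' b α)
    (hD : D.IsSymm) (hD' : D'.IsSymm) :
    (U * D * Vᵀ)ᵀ * ((U' * D' * V'ᵀ)ᵀ)ᴴ = V * D * (Uᵀ * U'.map star) * (V' * D')ᴴ := by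
  rw [conjTranspose_transpose_eq_transpose_conjTranspose, ← conjTranspose_transpose]
  simp only [transpose_mul, conjTranspose_mul, transpose_transpose, hD.eq, hD'.conjTranspose.eq,
    Matrix.mul_assoc, conjTranspose_transpose_eq_transpose_conjTranspose]

end Matrix

theorem channel_of_W_general {n p q r : ℕ} (k : Fin n → ℕ)
    (U : (i : Fin n) → Matrix (Fin q) (Fin (k i)) ℂ)
    (V : (i : Fin n) → Matrix (Fin p) (Fin (k i)) ℂ)
    (d : (i : Fin n) → Fin (k i) → ℝ)
    (R : Fin n → Matrix (Fin q) (Fin p) ℂ)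
    (hR : ∀ i, R i = U i * Matrix.diagonal (fun a => ((d i a : ℝ) : ℂ)) * (V i)ᵀ)
    (S : Fin n → Matrix (Fin p) (Fin q) ℂ)
    (hS : ∀ i, S i = (R i)ᵀ)
    (F : Fin r → Matrix (Fin p) (Fin q) ℂ)
    (W : (i : Fin n) → Fin r → Matrix (Fin (k i)) (Fin p) ℂ)
    (hW1 : ∀ (ℓ : Fin r) (i : Fin n),
      F ℓ * R i = V i * Matrix.diagonal (fun a => ((d i a : ℝ) : ℂ)) * W i ℓ)
    (hW2 : ∀ i j : Fin n,
      ∑ ℓ, W i ℓ * (W j ℓ)ᴴ = (U i)ᵀ * (U j).map (starRingEnd ℂ)) :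
    ∀ i j : Fin n, ∑ ℓ, F ℓ * (R i * (R j)ᴴ) * (F ℓ)ᴴ = S i * (S j)ᴴ := by
  intro i j
  calc ∑ ℓ, F ℓ * (R i * (R j)ᴴ) * (F ℓ)ᴴ
      = ∑ ℓ, F ℓ * R i * (F ℓ * R j)ᴴ := by simp only [conjTranspose_mul, Matrix.mul_assoc]
    _ = V i * diagonal (fun a => (d i a : ℂ)) * (∑ ℓ, W i ℓ * (W j ℓ)ᴴ) *
          (V j * diagonal (fun a => (d j a : ℂ)))ᴴ := by
        simp only [hW1, sum_mul_mul_conjTranspose_mul_s6]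
    _ = S i * (S j)ᴴ := by
        rw [hW2, hS, hS, hR, hR]
        exact (transpose_mul_conjTranspose_transpose _ _ _ _ _ _
          (isSymm_diagonal _) (isSymm_diagonal _)).symm

/-- Theorem 3.1 (c) ⇒ (b): if `R_i = U_i D_i V_iᵗ` is an SVD, `S_i = R_iᵗ`,
and there are Kraus operators `F_ℓ` (with `∑ F_ℓᴴ F_ℓ = 1`) and matrices `W_{iℓ}` with
`F_ℓ R_i = V_i D_i W_{iℓ}` and `∑_ℓ W_{iℓ} W_{jℓ}ᴴ = U_iᵗ conj(U_j)`, then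
`∑_ℓ F_ℓ R_i R_jᴴ F_ℓᴴ = S_i S_jᴴ` for all `i, j`. -/
theorem channel_of_W {n p q r : ℕ} (k : Fin n → ℕ)
    (U : (i : Fin n) → Matrix (Fin q) (Fin (k i)) ℂ)
    (V : (i : Fin n) → Matrix (Fin p) (Fin (k i)) ℂ)
    (d : (i : Fin n) → Fin (k i) → ℝ)
    (hd : ∀ i a, 0 < d i a)
    (hU : ∀ i, (U i)ᴴ * U i = 1)
    (hV : ∀ i, (V i)ᴴ * V i = 1)
    (R : Fin n → Matrix (Fin q) (Fin p) ℂ)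
    (hR : ∀ i, R i = U i * Matrix.diagonal (fun a => ((d i a : ℝ) : ℂ)) * (V i)ᵀ)
    (S : Fin n → Matrix (Fin p) (Fin q) ℂ)
    (hS : ∀ i, S i = (R i)ᵀ)
    (F : Fin r → Matrix (Fin p) (Fin q) ℂ)
    (hF : ∑ ℓ, (F ℓ)ᴴ * F ℓ = 1)
    (W : (i : Fin n) → Fin r → Matrix (Fin (k i)) (Fin p) ℂ)
    (hW1 : ∀ (ℓ : Fin r) (i : Fin n),
      F ℓ * R i = V i * Matrix.diagonal (fun a => ((d i a : ℝ) : ℂ)) * W i ℓ)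
    (hW2 : ∀ i j : Fin n,
      ∑ ℓ, W i ℓ * (W j ℓ)ᴴ = (U i)ᵀ * (U j).map (starRingEnd ℂ)) :
    ∀ i j : Fin n, ∑ ℓ, F ℓ * (R i * (R j)ᴴ) * (F ℓ)ᴴ = S i * (S j)ᴴ :=
  channel_of_W_general k U V d R hR S hS F W hW1 hW2
end

section
/- Let U_{ABE} = I_A ⊗ U_{BE} be a unitary on H_A ⊗ H_B ⊗ H_E with dim H_A = dim H_B = n, let |ψ_M⟩ = Σ_{i=1}^n |ii⟩ ∈ H_A⊗H_B be the (unnormalized) maximally entangled state, and let ρ = P(U_{ABE}|ψ_M⟩|0⟩_E). Suppose there is a TPCP map T of the form T(X) = Σ_j (I_A⊗F_j) X (I_A⊗F_j)* (F_j: H_E → H_B, Σ F_j*F_j = I_E) with T(tr_B ρ) = tr_E ρ. Then for every vector |ψ⟩ ∈ H_A⊗H_B, letting σ = P(U_{ABE}|ψ⟩|0⟩_E), the same map satisfies T(tr_B σ) = tr_E σ. -/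
open Matrix

/-- The purified output vector `U_{ABE}|ψ⟩|0⟩_E`, where `U_{ABE} = I_A ⊗ U_{BE}`. -/
noncomputable def purify {n e : ℕ} [NeZero e]
    (U : Matrix (Fin n × Fin e) (Fin n × Fin e) ℂ) (ψ : Fin n × Fin n → ℂ) :
    Fin n × Fin n × Fin e → ℂ :=
  fun a => ∑ b : Fin n × Fin e, U a.2 b * (ψ (a.1, b.1) * (if b.2 = (0 : Fin e) then (1 : ℂ) else 0))

/-- Partial trace over `B` of the rank-one projection onto `φ`. -/
noncomputable def trB {n e : ℕ} (φ : Fin n × Fin n × Fin e → ℂ) :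
    Matrix (Fin n × Fin e) (Fin n × Fin e) ℂ :=
  Matrix.of fun a b => ∑ j : Fin n, φ (a.1, j, a.2) * star (φ (b.1, j, b.2))

/-- Partial trace over `E` of the rank-one projection onto `φ`. -/
noncomputable def trE {n e : ℕ} (φ : Fin n × Fin n × Fin e → ℂ) :
    Matrix (Fin n × Fin n) (Fin n × Fin n) ℂ :=
  Matrix.of fun a b => ∑ k : Fin e, φ (a.1, a.2, k) * star (φ (b.1, b.2, k))

/-- The map `T(X) = ∑ ℓ (I_A ⊗ F_ℓ) X (I_A ⊗ F_ℓ)ᴴ` with `F_ℓ : H_E → H_B`. -/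
noncomputable def applyT {n e r : ℕ} (F : Fin r → Matrix (Fin n) (Fin e) ℂ)
    (X : Matrix (Fin n × Fin e) (Fin n × Fin e) ℂ) :
    Matrix (Fin n × Fin n) (Fin n × Fin n) ℂ :=
  ∑ ℓ, (Matrix.kroneckerMap (· * ·) (1 : Matrix (Fin n) (Fin n) ℂ) (F ℓ)) * X *
    (Matrix.kroneckerMap (· * ·) (1 : Matrix (Fin n) (Fin n) ℂ) (F ℓ))ᴴ

/-- The (unnormalized) maximally entangled state `∑ i |ii⟩`. -/
def psiM {n : ℕ} : Fin n × Fin n → ℂ := fun a => if a.1 = a.2 then 1 else 0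

/-!
Write `ψ = (K ⊗ I) ψ_M` with `K i j = ψ (i, j)`. Because `U` acts only on `BE`, the purification
of `ψ` is `K ⊗ I_{BE}` applied to that of `ψ_M`, so both reduced states `tr_B` and `tr_E` get
conjugated by `K ⊗ I`. The map `T` acts trivially on `A` and hence commutes with this
conjugation, which transports the hypothesis from `ψ_M` to `ψ`.
-/

open scoped Kronecker

lemma kronecker_one_mulVec_apply {R l m ι : Type*} [NonAssocSemiring R] [Fintype m]
    [Fintype ι] [DecidableEq ι] (K : Matrix l m R) (φ : m × ι → R) (i : l) (x : ι) :
    ((K ⊗ₖ (1 : Matrix ι ι R)) *ᵥ φ) (i, x) = ∑ p, K i p * φ (p, x) := by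
  simp [mulVec, dotProduct, Fintype.sum_prod_type, one_apply]

lemma purify_eq_kronecker_mulVec_purify_psiM {n e : ℕ} [NeZero e]
    (U : Matrix (Fin n × Fin e) (Fin n × Fin e) ℂ) (ψ : Fin n × Fin n → ℂ) :
    purify U ψ =
      (of (fun i j => ψ (i, j)) ⊗ₖ (1 : Matrix (Fin n × Fin e) _ ℂ)) *ᵥ purify U psiM := by
  ext ⟨i, x⟩
  rw [kronecker_one_mulVec_apply]
  simp only [purify, psiM, of_apply, Finset.mul_sum, mul_ite, mul_one, mul_zero]
  rw [Finset.sum_comm]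
  refine Finset.sum_congr rfl fun b _ => ?_
  simp [Finset.sum_ite_eq', mul_comm]

lemma trB_kronecker_one_mulVec {n e : ℕ} (K : Matrix (Fin n) (Fin n) ℂ)
    (φ : Fin n × Fin n × Fin e → ℂ) :
    trB ((K ⊗ₖ (1 : Matrix (Fin n × Fin e) _ ℂ)) *ᵥ φ) =
      (K ⊗ₖ (1 : Matrix (Fin e) (Fin e) ℂ)) * trB φ * (K ⊗ₖ 1)ᴴ := by
  ext ⟨a, k⟩ ⟨b, k'⟩
  simp only [trB, kronecker_one_mulVec_apply, star_sum, star_mul', RCLike.star_def,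
    Finset.mul_sum, Finset.sum_mul, of_apply, mul_apply, kroneckerMap_apply, one_apply, mul_ite,
    mul_one, mul_zero, ite_mul, zero_mul, Finset.sum_ite_irrel, Finset.sum_const_zero,
    Fintype.sum_prod_type, Finset.sum_ite_eq, Finset.mem_univ, ↓reduceIte, conjTranspose_apply,
    apply_ite (starRingEnd ℂ), map_zero]
  rw [Finset.sum_comm]
  refine Finset.sum_congr rfl fun q _ => ?_
  rw [Finset.sum_comm]
  exact Finset.sum_congr rfl fun p _ => Finset.sum_congr rfl fun j _ => by ring

lemma trE_kronecker_one_mulVec {n e : ℕ} (K : Matrix (Fin n) (Fin n) ℂ)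
    (φ : Fin n × Fin n × Fin e → ℂ) :
    trE ((K ⊗ₖ (1 : Matrix (Fin n × Fin e) _ ℂ)) *ᵥ φ) =
      (K ⊗ₖ (1 : Matrix (Fin n) (Fin n) ℂ)) * trE φ * (K ⊗ₖ 1)ᴴ := by
  ext ⟨a, j⟩ ⟨b, j'⟩
  simp only [trE, kronecker_one_mulVec_apply, star_sum, star_mul', RCLike.star_def,
    Finset.mul_sum, Finset.sum_mul, of_apply, mul_apply, kroneckerMap_apply, one_apply, mul_ite,
    mul_one, mul_zero, ite_mul, zero_mul, Finset.sum_ite_irrel, Finset.sum_const_zero,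
    Fintype.sum_prod_type, Finset.sum_ite_eq, Finset.mem_univ, ↓reduceIte, conjTranspose_apply,
    apply_ite (starRingEnd ℂ), map_zero]
  rw [Finset.sum_comm]
  refine Finset.sum_congr rfl fun q _ => ?_
  rw [Finset.sum_comm]
  exact Finset.sum_congr rfl fun p _ => Finset.sum_congr rfl fun j _ => by ring

lemma applyT_conj_kronecker_one {n e r : ℕ} (F : Fin r → Matrix (Fin n) (Fin e) ℂ)
    (K : Matrix (Fin n) (Fin n) ℂ) (X : Matrix (Fin n × Fin e) (Fin n × Fin e) ℂ) :
    applyT F ((K ⊗ₖ (1 : Matrix (Fin e) (Fin e) ℂ)) * X * (K ⊗ₖ 1)ᴴ) =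
      (K ⊗ₖ (1 : Matrix (Fin n) (Fin n) ℂ)) * applyT F X * (K ⊗ₖ 1)ᴴ := by
  simp only [applyT, Finset.mul_sum, Finset.sum_mul]
  refine Finset.sum_congr rfl fun ℓ _ => ?_
  have hcomm : ((1 : Matrix (Fin n) (Fin n) ℂ) ⊗ₖ F ℓ) * (K ⊗ₖ (1 : Matrix (Fin e) (Fin e) ℂ)) =
      (K ⊗ₖ (1 : Matrix (Fin n) (Fin n) ℂ)) * ((1 : Matrix (Fin n) (Fin n) ℂ) ⊗ₖ F ℓ) := by
    rw [← mul_kronecker_mul, ← mul_kronecker_mul]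
    simp
  have hcomm_star := congrArg conjTranspose hcomm
  simp only [conjTranspose_mul] at hcomm_star
  change (1 ⊗ₖ F ℓ) * _ * (1 ⊗ₖ F ℓ)ᴴ = _ * ((1 ⊗ₖ F ℓ) * X * (1 ⊗ₖ F ℓ)ᴴ) * _
  simp only [Matrix.mul_assoc]
  rw [← Matrix.mul_assoc (1 ⊗ₖ F ℓ), hcomm, hcomm_star]
  simp only [Matrix.mul_assoc]

theorem degradable_of_maxEntangled_general {n e r : ℕ} [NeZero e]
    (U : Matrix (Fin n × Fin e) (Fin n × Fin e) ℂ)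
    (F : Fin r → Matrix (Fin n) (Fin e) ℂ)
    (hT : applyT F (trB (purify U psiM)) = trE (purify U psiM)) :
    ∀ ψ : Fin n × Fin n → ℂ,
      applyT F (trB (purify U ψ)) = trE (purify U ψ) := by
  intro ψ
  rw [purify_eq_kronecker_mulVec_purify_psiM, trB_kronecker_one_mulVec,
    trE_kronecker_one_mulVec, applyT_conj_kronecker_one, hT]

/-- Theorem 5.1: if `T` degrades `E` to `B` for the channel output of the
maximally entangled state, then the same `T` works for the output of every input state. -/
theorem degradable_of_maxEntangled {n e r : ℕ} [NeZero e]
    (U : Matrix (Fin n × Fin e) (Fin n × Fin e) ℂ)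
    (hU : U ∈ Matrix.unitaryGroup (Fin n × Fin e) ℂ)
    (F : Fin r → Matrix (Fin n) (Fin e) ℂ)
    (hF : ∑ ℓ, (F ℓ)ᴴ * F ℓ = 1)
    (hT : applyT F (trB (purify U psiM)) = trE (purify U psiM)) :
    ∀ ψ : Fin n × Fin n → ℂ,
      applyT F (trB (purify U ψ)) = trE (purify U ψ) :=
  degradable_of_maxEntangled_general U F hT
end

section
/- Suppose the output of channel Φ_B (defined by Φ_B(ρ) = tr_E[U_{BE}(ρ ⊗ |0⟩⟨0|_E)U_{BE}*]) on the maximally entangled state is E→B degradable, i.e., there exist Kraus operators F_j: H_E → H_B with Σ F_j*F_j = I_E such that Σ_j (I_A⊗F_j) tr_B(P(U_{ABE}|ψ_M⟩|0⟩_E)) (I_A⊗F_j)* = tr_E(P(U_{ABE}|ψ_M⟩|0⟩_E)). Then the channel Φ_B is anti-degradable: the TPCP map T̂(X) = Σ_j F_j X F_j* satisfies T̂ ∘ Φ_E = Φ_B, where Φ_E(ρ) = tr_B[U_{BE}(ρ ⊗ |0⟩⟨0|_E)U_{BE}*] is the complementary channel. -/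
open Matrix


open Matrix

/-- `U_{BE}(ρ ⊗ |0⟩⟨0|_E)U_{BE}ᴴ`. -/
noncomputable def chanOut {n e : ℕ} [NeZero e]
    (U : Matrix (Fin n × Fin e) (Fin n × Fin e) ℂ) (ρ : Matrix (Fin n) (Fin n) ℂ) :
    Matrix (Fin n × Fin e) (Fin n × Fin e) ℂ :=
  U * (Matrix.kroneckerMap (· * ·) ρ
        (Matrix.of fun k l : Fin e => if k = 0 ∧ l = 0 then (1 : ℂ) else 0)) * Uᴴ

/-- The channel `Φ_B(ρ) = tr_E[U_{BE}(ρ ⊗ |0⟩⟨0|_E)U_{BE}ᴴ]`. -/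
noncomputable def PhiB {n e : ℕ} [NeZero e]
    (U : Matrix (Fin n × Fin e) (Fin n × Fin e) ℂ) (ρ : Matrix (Fin n) (Fin n) ℂ) :
    Matrix (Fin n) (Fin n) ℂ :=
  Matrix.of fun i j => ∑ k : Fin e, chanOut U ρ (i, k) (j, k)

/-- The complementary channel `Φ_E(ρ) = tr_B[U_{BE}(ρ ⊗ |0⟩⟨0|_E)U_{BE}ᴴ]`. -/
noncomputable def PhiE {n e : ℕ} [NeZero e]
    (U : Matrix (Fin n × Fin e) (Fin n × Fin e) ℂ) (ρ : Matrix (Fin n) (Fin n) ℂ) :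
    Matrix (Fin e) (Fin e) ℂ :=
  Matrix.of fun k l => ∑ i : Fin n, chanOut U ρ (i, k) (i, l)

/-
`tr_B P(U_{ABE}|ψ_M⟩|0⟩_E)` is the Choi matrix `∑_{c,d} E_{cd} ⊗ Φ_E(E_{cd})` of `Φ_E`,
and `tr_E P(U_{ABE}|ψ_M⟩|0⟩_E)` is the Choi matrix of `Φ_B`. Since `I_A ⊗ T̂` acts on a
Choi matrix block by block, the hypothesis says that `T̂ ∘ Φ_E` and `Φ_B` have the same
Choi matrix, and a linear map on matrices is determined by its Choi matrix, i.e. by its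
values on the matrix units `E_{cd}`.
-/

section Choi

variable {m p R : Type*} [Fintype m] [DecidableEq m]

def choiMatrix [Zero R] [One R] (Φ : Matrix m m R → Matrix p p R) : Matrix (m × p) (m × p) R :=
  Matrix.comp m m p p R (Matrix.of fun c d => Φ (single c d 1))

theorem LinearMap.eq_of_choiMatrix_eq [CommSemiring R] {Φ Ψ : Matrix m m R →ₗ[R] Matrix p p R}
    (h : choiMatrix Φ = choiMatrix Ψ) : Φ = Ψ := by
  refine (Matrix.stdBasis R m m).ext fun ⟨c, d⟩ => ?_
  have := congrFun (congrFun ((Matrix.comp m m p p R).injective h) c) d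
  simpa [stdBasis_eq_single] using this

end Choi

section Kraus

variable {ι m p R : Type*} [Fintype ι] [Fintype p] [CommSemiring R] [StarRing R]

def krausMap (F : ι → Matrix m p R) : Matrix p p R →ₗ[R] Matrix m m R where
  toFun (X : Matrix p p R) := ∑ i, F i * X * (F i)ᴴ
  map_add' X Y := by simp [Matrix.mul_add, Matrix.add_mul, Finset.sum_add_distrib]
  map_smul' c X := by simp [Finset.smul_sum]

end Kraus

theorem applyT_choiMatrix {n e r : ℕ} (F : Fin r → Matrix (Fin n) (Fin e) ℂ)
    (Φ : Matrix (Fin n) (Fin n) ℂ → Matrix (Fin e) (Fin e) ℂ) :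
    applyT F (choiMatrix Φ) = choiMatrix (krausMap F ∘ Φ) := by
  ext ⟨c, i⟩ ⟨d, j⟩
  simp [applyT, choiMatrix, krausMap, Matrix.sum_apply, Matrix.mul_apply, Fintype.sum_prod_type,
    one_apply, apply_ite]

section Channel

variable {n e : ℕ} [NeZero e] (U : Matrix (Fin n × Fin e) (Fin n × Fin e) ℂ)

theorem chanOut_add (ρ σ : Matrix (Fin n) (Fin n) ℂ) :
    chanOut U (ρ + σ) = chanOut U ρ + chanOut U σ := by
  simp only [chanOut, kroneckerMap_add_left _ add_mul, Matrix.mul_add, Matrix.add_mul]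

theorem chanOut_smul (c : ℂ) (ρ : Matrix (Fin n) (Fin n) ℂ) :
    chanOut U (c • ρ) = c • chanOut U ρ := by
  simp only [chanOut, kroneckerMap_smul_left _ c (smul_mul_assoc c), Matrix.mul_smul,
    Matrix.smul_mul]

noncomputable def PhiBLinearMap :
    Matrix (Fin n) (Fin n) ℂ →ₗ[ℂ] Matrix (Fin n) (Fin n) ℂ where
  toFun := PhiB U
  map_add' ρ σ := by ext; simp [PhiB, chanOut_add, Finset.sum_add_distrib]
  map_smul' c ρ := by ext; simp [PhiB, chanOut_smul, Finset.mul_sum]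

noncomputable def PhiELinearMap :
    Matrix (Fin n) (Fin n) ℂ →ₗ[ℂ] Matrix (Fin e) (Fin e) ℂ where
  toFun := PhiE U
  map_add' ρ σ := by ext; simp [PhiE, chanOut_add, Finset.sum_add_distrib]
  map_smul' c ρ := by ext; simp [PhiE, chanOut_smul, Finset.mul_sum]

theorem chanOut_single (c d : Fin n) (a b : Fin n × Fin e) :
    chanOut U (single c d 1) a b = U a (c, 0) * star (U b (d, 0)) := by
  have hP0 :
      (Matrix.of fun k l : Fin e => if k = 0 ∧ l = 0 then (1 : ℂ) else 0) = single 0 0 1 := by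
    ext k l; simp [single_apply, eq_comm]
  rw [chanOut, hP0, kroneckerMap_single_single _ _ _ _ _ zero_mul mul_zero, mul_one]
  simp [Matrix.mul_apply, single_apply, ite_and]

theorem purify_psiM_apply (i j : Fin n) (k : Fin e) :
    purify U psiM (i, j, k) = U (j, k) (i, 0) := by
  simp [purify, psiM, Fintype.sum_prod_type]

theorem trB_purify_psiM : trB (purify U psiM) = choiMatrix (PhiE U) := by
  ext ⟨c, k⟩ ⟨d, l⟩
  simp [trB, choiMatrix, PhiE, chanOut_single, purify_psiM_apply]

theorem trE_purify_psiM : trE (purify U psiM) = choiMatrix (PhiB U) := by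
  ext ⟨c, i⟩ ⟨d, j⟩
  simp [trE, choiMatrix, PhiB, chanOut_single, purify_psiM_apply]

end Channel

theorem antidegradable_of_maxEntangled_degradable_general {n e r : ℕ} [NeZero e]
    (U : Matrix (Fin n × Fin e) (Fin n × Fin e) ℂ)
    (F : Fin r → Matrix (Fin n) (Fin e) ℂ)
    (hT : applyT F (trB (purify U psiM)) = trE (purify U psiM)) :
    ∀ ρ : Matrix (Fin n) (Fin n) ℂ, ∑ ℓ, F ℓ * PhiE U ρ * (F ℓ)ᴴ = PhiB U ρ := by
  rw [trB_purify_psiM, trE_purify_psiM, applyT_choiMatrix] at hT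
  have hmaps : krausMap F ∘ₗ PhiELinearMap U = PhiBLinearMap U :=
    LinearMap.eq_of_choiMatrix_eq hT
  exact fun ρ => LinearMap.congr_fun hmaps ρ

/-- Corollary 5.2: if the output of `Φ_B` on the maximally entangled state
is `E → B` degradable via the Kraus family `F`, then `T̂ ∘ Φ_E = Φ_B` where
`T̂(X) = ∑ ℓ F_ℓ X F_ℓᴴ`; i.e. the channel `Φ_B` is anti-degradable. -/
theorem antidegradable_of_maxEntangled_degradable {n e r : ℕ} [NeZero e]
    (U : Matrix (Fin n × Fin e) (Fin n × Fin e) ℂ)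
    (hU : U ∈ Matrix.unitaryGroup (Fin n × Fin e) ℂ)
    (F : Fin r → Matrix (Fin n) (Fin e) ℂ)
    (hF : ∑ ℓ, (F ℓ)ᴴ * F ℓ = 1)
    (hT : applyT F (trB (purify U psiM)) = trE (purify U psiM)) :
    ∀ ρ : Matrix (Fin n) (Fin n) ℂ, ∑ ℓ, F ℓ * PhiE U ρ * (F ℓ)ᴴ = PhiB U ρ :=
  antidegradable_of_maxEntangled_degradable_general U F hT
end

section
/- For the qubit depolarizing channel with parameter ε, 0 ≤ ε ≤ 3/4, define (with α = √(1−ε), β = √(ε/3)) the matrices R_0 = S_0^t, R_1 = S_1^t where S_0 = [[α, β, 0, 0],[0, 0, β, β]] ∈ M_{2,4} and S_1 = [[0, 0, −β, β],[α, −β, 0, 0]] ∈ M_{2,4}, and assume α > β. Then the singular values of R_0R_0* − R_1R_1* ∈ M_4 are {2αβ, 2αβ, 2β², 2β²} and the singular values of S_0S_0* − S_1S_1* ∈ M_2 are {α²−β², α²−β²}; consequently (1/2)‖R_0R_0* − R_1R_1*‖₁ = 2β(α+β) and (1/2)‖S_0S_0* − S_1S_1*‖₁ = (α+β)(α−β).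 -/
/-!
Both differences are computed in closed form. `S₀S₀ᴴ - S₁S₁ᴴ` is already the real diagonal
matrix `diag(α² - β², β² - α²)`, while `R₀R₀ᴴ - R₁R₁ᴴ` is the direct sum of `2αβ` times the swap
of the first two coordinates and `2β²` times the swap of the last two, so its Gram matrix is
diagonal with entries `(2αβ)², (2αβ)², (2β²)², (2β²)²`. A Hermitian matrix equal to a real
diagonal matrix has the diagonal entries as its multiset of eigenvalues (compare characteristic
polynomials), so the singular values are the square roots of these entries; `0 ≤ β < α` fixes
the signs.
-/

open Matrix

/-- The singular values of a (rectangular) complex matrix: square roots of the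
eigenvalues of `Aᴴ * A`. -/
noncomputable def singVals {m n : ℕ} (A : Matrix (Fin m) (Fin n) ℂ) : Fin n → ℝ :=
  fun i => Real.sqrt ((Matrix.isHermitian_conjTranspose_mul_self A).eigenvalues i)

/-- The trace norm: sum of the singular values. -/
noncomputable def traceNorm {m n : ℕ} (A : Matrix (Fin m) (Fin n) ℂ) : ℝ :=
  ∑ i, singVals A i

theorem Matrix.IsHermitian.map_eigenvalues_eq_of_eq_diagonal {𝕜 n : Type*} [RCLike 𝕜]
    [Fintype n] [DecidableEq n] {A : Matrix n n 𝕜} (hA : A.IsHermitian) {d : n → ℝ}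
    (hd : A = diagonal fun i => (d i : 𝕜)) :
    Finset.univ.val.map hA.eigenvalues = Finset.univ.val.map d := by
  apply Multiset.map_injective (RCLike.ofReal_injective (K := 𝕜))
  have hprod : ∏ i, (Polynomial.X - Polynomial.C (d i : 𝕜)) ≠ 0 :=
    Finset.prod_ne_zero_iff.2 fun i _ => Polynomial.X_sub_C_ne_zero _
  rw [Multiset.map_map, Multiset.map_map, ← hA.roots_charpoly_eq_eigenvalues, hd,
    charpoly_diagonal, Polynomial.roots_prod _ _ hprod]
  simp

theorem map_singVals_eq_of_conjTranspose_mul_self_eq_diagonal {m n : ℕ}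
    {A : Matrix (Fin m) (Fin n) ℂ} {s : Fin n → ℝ} (hs : ∀ i, 0 ≤ s i)
    (hA : Aᴴ * A = diagonal fun i => ((s i ^ 2 : ℝ) : ℂ)) :
    Finset.univ.val.map (singVals A) = Finset.univ.val.map s := by
  rw [show singVals A = Real.sqrt ∘ _ from rfl, ← Multiset.map_map,
    (isHermitian_conjTranspose_mul_self A).map_eigenvalues_eq_of_eq_diagonal hA, Multiset.map_map]
  exact Multiset.map_congr rfl fun i _ => Real.sqrt_sq (hs i)

theorem map_singVals_diagonal {n : ℕ} (d : Fin n → ℝ) :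
    Finset.univ.val.map (singVals (diagonal fun i => (d i : ℂ))) =
      Finset.univ.val.map fun i => |d i| := by
  refine map_singVals_eq_of_conjTranspose_mul_self_eq_diagonal (fun i => abs_nonneg (d i)) ?_
  rw [diagonal_conjTranspose, diagonal_mul_diagonal]
  congr 1
  ext i
  simp [pow_two]

theorem traceNorm_eq_sum_map_singVals {m n : ℕ} (A : Matrix (Fin m) (Fin n) ℂ) :
    traceNorm A = (Finset.univ.val.map (singVals A)).sum := rfl

def depolarizingS₀ (α β : ℝ) : Matrix (Fin 2) (Fin 4) ℂ :=
  !![(α : ℂ), (β : ℂ), 0, 0; 0, 0, (β : ℂ), (β : ℂ)]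

def depolarizingS₁ (α β : ℝ) : Matrix (Fin 2) (Fin 4) ℂ :=
  !![0, 0, -(β : ℂ), (β : ℂ); (α : ℂ), -(β : ℂ), 0, 0]

theorem depolarizingS_gram_diff (α β : ℝ) :
    depolarizingS₀ α β * (depolarizingS₀ α β)ᴴ - depolarizingS₁ α β * (depolarizingS₁ α β)ᴴ =
      diagonal fun i => ((![α ^ 2 - β ^ 2, -(α ^ 2 - β ^ 2)] i : ℝ) : ℂ) := by
  ext i j
  fin_cases i <;> fin_cases j <;>
    simp [depolarizingS₀, depolarizingS₁, vecMul, dotProduct, Fin.sum_univ_four] <;>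
    ring

def pairSwap (a b : ℝ) : Matrix (Fin 4) (Fin 4) ℂ :=
  !![0, (a : ℂ), 0, 0; (a : ℂ), 0, 0, 0; 0, 0, 0, (b : ℂ); 0, 0, (b : ℂ), 0]

theorem pairSwap_conjTranspose_mul_self (a b : ℝ) :
    (pairSwap a b)ᴴ * pairSwap a b = diagonal fun i => ((![a, a, b, b] i ^ 2 : ℝ) : ℂ) := by
  ext i j
  fin_cases i <;> fin_cases j <;>
    simp [pairSwap, mul_apply, Fin.sum_univ_four, pow_two]

theorem depolarizingR_gram_diff (α β : ℝ) :
    (depolarizingS₀ α β)ᵀ * (depolarizingS₀ α β)ᵀᴴ -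
        (depolarizingS₁ α β)ᵀ * (depolarizingS₁ α β)ᵀᴴ =
      pairSwap (2 * α * β) (2 * β ^ 2) := by
  ext i j
  fin_cases i <;> fin_cases j <;>
    simp [depolarizingS₀, depolarizingS₁, pairSwap, mul_apply, Fin.sum_univ_two] <;>
    ring

theorem depolarizing_singular_values_general (ε α β : ℝ)
    (hβ : β = Real.sqrt (ε / 3)) (hαβ : β < α)
    (S₀ S₁ : Matrix (Fin 2) (Fin 4) ℂ)
    (hS₀ : S₀ = !![(α : ℂ), (β : ℂ), 0, 0; 0, 0, (β : ℂ), (β : ℂ)])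
    (hS₁ : S₁ = !![0, 0, -(β : ℂ), (β : ℂ); (α : ℂ), -(β : ℂ), 0, 0])
    (R₀ R₁ : Matrix (Fin 4) (Fin 2) ℂ)
    (hR₀ : R₀ = S₀ᵀ) (hR₁ : R₁ = S₁ᵀ) :
    (Finset.univ.val.map (singVals (R₀ * R₀ᴴ - R₁ * R₁ᴴ))
        = ({2 * α * β, 2 * α * β, 2 * β ^ 2, 2 * β ^ 2} : Multiset ℝ)) ∧
    (Finset.univ.val.map (singVals (S₀ * S₀ᴴ - S₁ * S₁ᴴ))
        = ({α ^ 2 - β ^ 2, α ^ 2 - β ^ 2} : Multiset ℝ)) ∧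
    (1 / 2 : ℝ) * traceNorm (R₀ * R₀ᴴ - R₁ * R₁ᴴ) = 2 * β * (α + β) ∧
    (1 / 2 : ℝ) * traceNorm (S₀ * S₀ᴴ - S₁ * S₁ᴴ) = (α + β) * (α - β) := by
  have hβ0 : 0 ≤ β := hβ ▸ Real.sqrt_nonneg _
  have hα0 : 0 ≤ α := hβ0.trans hαβ.le
  have hgap : 0 ≤ α ^ 2 - β ^ 2 := by nlinarith
  obtain rfl : S₀ = depolarizingS₀ α β := hS₀
  obtain rfl : S₁ = depolarizingS₁ α β := hS₁
  subst hR₀ hR₁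
  have hR : Finset.univ.val.map (singVals ((depolarizingS₀ α β)ᵀ * (depolarizingS₀ α β)ᵀᴴ -
      (depolarizingS₁ α β)ᵀ * (depolarizingS₁ α β)ᵀᴴ)) =
        {2 * α * β, 2 * α * β, 2 * β ^ 2, 2 * β ^ 2} := by
    refine (map_singVals_eq_of_conjTranspose_mul_self_eq_diagonal
      (s := ![2 * α * β, 2 * α * β, 2 * β ^ 2, 2 * β ^ 2]) (fun i => ?_) ?_).trans rfl
    · fin_cases i <;> simp <;> positivity
    · rw [depolarizingR_gram_diff, pairSwap_conjTranspose_mul_self]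
  have hS : Finset.univ.val.map (singVals (depolarizingS₀ α β * (depolarizingS₀ α β)ᴴ -
      depolarizingS₁ α β * (depolarizingS₁ α β)ᴴ)) = {α ^ 2 - β ^ 2, α ^ 2 - β ^ 2} := by
    rw [depolarizingS_gram_diff, map_singVals_diagonal]
    change ({|α ^ 2 - β ^ 2|, |-(α ^ 2 - β ^ 2)|} : Multiset ℝ) = _
    rw [abs_neg, abs_of_nonneg hgap]
  refine ⟨hR, hS, ?_, ?_⟩
  · rw [traceNorm_eq_sum_map_singVals, hR]
    simp only [Multiset.insert_eq_cons, Multiset.sum_cons, Multiset.sum_singleton]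
    ring
  · rw [traceNorm_eq_sum_map_singVals, hS]
    simp only [Multiset.insert_eq_cons, Multiset.sum_cons, Multiset.sum_singleton]
    ring

/-- for the depolarizing-channel matrices with `α = √(1−ε)`, `β = √(ε/3)`,
`α > β`, the singular values of `R₀R₀ᴴ − R₁R₁ᴴ` are `{2αβ, 2αβ, 2β², 2β²}`, those of
`S₀S₀ᴴ − S₁S₁ᴴ` are `{α²−β², α²−β²}`, and hence the trace distances are `2β(α+β)` and
`(α+β)(α−β)` respectively. -/
theorem depolarizing_singular_values (ε α β : ℝ)
    (hε0 : 0 ≤ ε) (hε1 : ε ≤ 3 / 4)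
    (hα : α = Real.sqrt (1 - ε)) (hβ : β = Real.sqrt (ε / 3)) (hαβ : β < α)
    (S₀ S₁ : Matrix (Fin 2) (Fin 4) ℂ)
    (hS₀ : S₀ = !![(α : ℂ), (β : ℂ), 0, 0; 0, 0, (β : ℂ), (β : ℂ)])
    (hS₁ : S₁ = !![0, 0, -(β : ℂ), (β : ℂ); (α : ℂ), -(β : ℂ), 0, 0])
    (R₀ R₁ : Matrix (Fin 4) (Fin 2) ℂ)
    (hR₀ : R₀ = S₀ᵀ) (hR₁ : R₁ = S₁ᵀ) :
    (Finset.univ.val.map (singVals (R₀ * R₀ᴴ - R₁ * R₁ᴴ))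
        = ({2 * α * β, 2 * α * β, 2 * β ^ 2, 2 * β ^ 2} : Multiset ℝ)) ∧
    (Finset.univ.val.map (singVals (S₀ * S₀ᴴ - S₁ * S₁ᴴ))
        = ({α ^ 2 - β ^ 2, α ^ 2 - β ^ 2} : Multiset ℝ)) ∧
    (1 / 2 : ℝ) * traceNorm (R₀ * R₀ᴴ - R₁ * R₁ᴴ) = 2 * β * (α + β) ∧
    (1 / 2 : ℝ) * traceNorm (S₀ * S₀ᴴ - S₁ * S₁ᴴ) = (α + β) * (α - β) :=
  depolarizing_singular_values_general ε α β hβ hαβ S₀ S₁ hS₀ hS₁ R₀ R₁ hR₀ hR₁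
end
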